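/- The derived (commutator) subgroup of the Jonquières group equals its unipotent part: [Jonq(n), Jonq(n)] = Jonq_u(n). -/

import Mathlib

open MvPolynomial

noncomputable section

variable (k : Type*) [Field k] (n : ℕ)

/-- `Asub k n j` is the subalgebra of `k[x_1,…,x_n]` generated by the first `j` variables
`x_1, …, x_j`  (so `Asub k n 0 = k` and `Asub k n n` is everything). -/
def Asub (j : ℕ) : Subalgebra k (MvPolynomial (Fin n) k) :=
  Algebra.adjoin k {P | ∃ i : Fin n, (i : ℕ) < j ∧ P = X i}

/-- The Jonquières subgroup of the automorphism group of affine `n`-space: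
all `k`-algebra automorphisms `φ` of `k[x_1,…,x_n]` with `φ (Asub k n j) = Asub k n j`
for every `j = 1, …, n` (the condition for `j = 0` holds trivially). -/
def Jonq : Subgroup (MvPolynomial (Fin n) k ≃ₐ[k] MvPolynomial (Fin n) k) where
  carrier := {φ | ∀ j ≤ n,
    (Asub k n j).map (φ : MvPolynomial (Fin n) k →ₐ[k] MvPolynomial (Fin n) k) = Asub k n j}
  one_mem' := by
    intro j _
    have h : ((1 : MvPolynomial (Fin n) k ≃ₐ[k] MvPolynomial (Fin n) k) :
        MvPolynomial (Fin n) k →ₐ[k] MvPolynomial (Fin n) k) = AlgHom.id k _ := by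
      ext x; rfl
    rw [h, Subalgebra.map_id]
  mul_mem' := by
    intro φ ψ hφ hψ j hj
    have h : ((φ * ψ : MvPolynomial (Fin n) k ≃ₐ[k] MvPolynomial (Fin n) k) :
        MvPolynomial (Fin n) k →ₐ[k] MvPolynomial (Fin n) k)
        = (φ : MvPolynomial (Fin n) k →ₐ[k] MvPolynomial (Fin n) k).comp
          (ψ : MvPolynomial (Fin n) k →ₐ[k] MvPolynomial (Fin n) k) := by
      ext x; rfl
    rw [h, ← Subalgebra.map_map, hψ j hj, hφ j hj]
  inv_mem' := by
    intro φ hφ j hj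
    conv_lhs => rw [← hφ j hj]
    rw [Subalgebra.map_map]
    have h : ((φ⁻¹ : MvPolynomial (Fin n) k ≃ₐ[k] MvPolynomial (Fin n) k) :
          MvPolynomial (Fin n) k →ₐ[k] MvPolynomial (Fin n) k).comp
          (φ : MvPolynomial (Fin n) k →ₐ[k] MvPolynomial (Fin n) k) = AlgHom.id k _ := by
      exact AlgHom.ext fun x => φ.symm_apply_apply x
    rw [h, Subalgebra.map_id]

lemma mem_Jonq_iff (φ : MvPolynomial (Fin n) k ≃ₐ[k] MvPolynomial (Fin n) k) :
    φ ∈ Jonq k n ↔ ∀ j ≤ n,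
      (Asub k n j).map (φ : MvPolynomial (Fin n) k →ₐ[k] MvPolynomial (Fin n) k)
        = Asub k n j :=
  Iff.rfl

/-- The unipotent Jonquières subgroup: those `φ` in the Jonquières subgroup with
`φ (x_i) - x_i ∈ Asub k n (i-1)` for every `i = 1, …, n` (zero-indexed below). -/
def JonqU : Subgroup (MvPolynomial (Fin n) k ≃ₐ[k] MvPolynomial (Fin n) k) where
  carrier := {φ | φ ∈ Jonq k n ∧ ∀ i : Fin n, φ (X i) - X i ∈ Asub k n (i : ℕ)}
  one_mem' := ⟨(Jonq k n).one_mem, fun i => by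
    simpa using (Asub k n (i : ℕ)).zero_mem⟩
  mul_mem' := by
    rintro φ ψ ⟨hφJ, hφU⟩ ⟨hψJ, hψU⟩
    refine ⟨(Jonq k n).mul_mem hφJ hψJ, fun i => ?_⟩
    have h1 : φ (ψ (X i) - X i) ∈ Asub k n (i : ℕ) := by
      have h := (mem_Jonq_iff k n φ).mp hφJ (i : ℕ) (le_of_lt i.isLt)
      rw [← h]
      exact Subalgebra.mem_map.mpr ⟨_, hψU i, rfl⟩
    have h2 : (φ * ψ) (X i) - X i = φ (ψ (X i) - X i) + (φ (X i) - X i) := by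
      rw [AlgEquiv.mul_apply, map_sub]; ring
    rw [h2]
    exact add_mem h1 (hφU i)
  inv_mem' := by
    rintro φ ⟨hφJ, hφU⟩
    refine ⟨(Jonq k n).inv_mem hφJ, fun i => ?_⟩
    have h1 : φ⁻¹ (φ (X i) - X i) ∈ Asub k n (i : ℕ) := by
      have h := (mem_Jonq_iff k n φ⁻¹).mp ((Jonq k n).inv_mem hφJ) (i : ℕ) (le_of_lt i.isLt)
      rw [← h]
      exact Subalgebra.mem_map.mpr ⟨_, hφU i, rfl⟩
    have h2 : φ⁻¹ (X i) - X i = -(φ⁻¹ (φ (X i) - X i)) := by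
      rw [map_sub]
      have h : φ⁻¹ (φ (X i)) = X i := φ.symm_apply_apply (X i)
      rw [h]; ring
    rw [h2]
    exact neg_mem h1

variable {k n}

lemma Asub_eq (j : ℕ) :
    Asub k n j = supported k {i : Fin n | (i : ℕ) < j} := by
  rw [Asub, supported_eq_adjoin_X]
  congr 1
  ext p
  simp only [Set.mem_setOf_eq, Set.mem_image]
  constructor
  · rintro ⟨i, hi, rfl⟩; exact ⟨i, hi, rfl⟩
  · rintro ⟨i, hi, rfl⟩; exact ⟨i, hi, rfl⟩

lemma mem_Asub {j : ℕ} {p : MvPolynomial (Fin n) k} :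
    p ∈ Asub k n j ↔ ↑p.vars ⊆ {i : Fin n | (i : ℕ) < j} := by
  rw [Asub_eq, mem_supported]

lemma Asub_mono {j j' : ℕ} (h : j ≤ j') : Asub k n j ≤ Asub k n j' := by
  rw [Asub_eq, Asub_eq]
  exact supported_mono (fun i hi => lt_of_lt_of_le hi h)

lemma X_mem_Asub {i : Fin n} {j : ℕ} (h : (i : ℕ) < j) : X i ∈ Asub k n j :=
  Algebra.subset_adjoin ⟨i, h, rfl⟩

lemma C_mul_X_mem_Asub {i : Fin n} {j : ℕ} (h : (i : ℕ) < j) (c : k) :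
    C c * X i ∈ Asub k n j :=
  mul_mem ((Asub k n j).algebraMap_mem c) (X_mem_Asub h)

/-- induction principle for membership in `Asub`. -/
lemma Asub_induction {j : ℕ} {p : MvPolynomial (Fin n) k}
    {motive : MvPolynomial (Fin n) k → Prop}
    (hX : ∀ i : Fin n, (i : ℕ) < j → motive (X i))
    (halg : ∀ c : k, motive (C c))
    (hadd : ∀ p q, motive p → motive q → motive (p + q))
    (hmul : ∀ p q, motive p → motive q → motive (p * q))
    (hp : p ∈ Asub k n j) : motive p := by
  refine Algebra.adjoin_induction ?_ ?_ (fun p q _ _ => hadd p q)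
    (fun p q _ _ => hmul p q) hp
  · rintro x ⟨i, hi, rfl⟩; exact hX i hi
  · intro r; exact halg r

lemma aeval_congr_Asub {j : ℕ} {p : MvPolynomial (Fin n) k}
    {S : Type*} [CommRing S] [Algebra k S] {f g : Fin n → S}
    (h : ∀ i : Fin n, (i : ℕ) < j → f i = g i) (hp : p ∈ Asub k n j) :
    aeval f p = aeval g p := by
  refine Asub_induction (motive := fun p => aeval f p = aeval g p) (fun i hi => ?_) (fun c => ?_) (fun p q hp hq => ?_)
    (fun p q hp hq => ?_) hp
  · simp [h i hi]
  · simp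
  · simp [map_add, hp, hq]
  · simp [map_mul, hp, hq]

lemma aeval_fix_Asub {j : ℕ} {p : MvPolynomial (Fin n) k}
    {f : Fin n → MvPolynomial (Fin n) k}
    (h : ∀ i : Fin n, (i : ℕ) < j → f i = X i) (hp : p ∈ Asub k n j) :
    aeval f p = p := by
  rw [aeval_congr_Asub h hp, aeval_X_left_apply]


lemma Jonq_apply_mem {φ : MvPolynomial (Fin n) k ≃ₐ[k] MvPolynomial (Fin n) k}
    (hφ : φ ∈ Jonq k n) {j : ℕ} (hj : j ≤ n) {p : MvPolynomial (Fin n) k}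
    (hp : p ∈ Asub k n j) : φ p ∈ Asub k n j := by
  have h := (mem_Jonq_iff k n φ).mp hφ j hj
  rw [← h]
  exact Subalgebra.mem_map.mpr ⟨p, hp, rfl⟩

lemma Jonq_X_mem {φ : MvPolynomial (Fin n) k ≃ₐ[k] MvPolynomial (Fin n) k}
    (hφ : φ ∈ Jonq k n) (i : Fin n) : φ (X i) ∈ Asub k n ((i : ℕ) + 1) :=
  Jonq_apply_mem hφ i.isLt (X_mem_Asub (Nat.lt_succ_self _))

lemma Jonq_of_gen {φ : MvPolynomial (Fin n) k ≃ₐ[k] MvPolynomial (Fin n) k}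
    (h : ∀ j ≤ n, ∀ i : Fin n, (i : ℕ) < j →
      φ (X i) ∈ Asub k n j ∧ φ⁻¹ (X i) ∈ Asub k n j) : φ ∈ Jonq k n := by
  rw [mem_Jonq_iff]
  intro j hj
  have key : ∀ ψ : MvPolynomial (Fin n) k ≃ₐ[k] MvPolynomial (Fin n) k,
      (∀ i : Fin n, (i : ℕ) < j → ψ (X i) ∈ Asub k n j) →
      (Asub k n j).map (ψ : MvPolynomial (Fin n) k →ₐ[k] MvPolynomial (Fin n) k)
        ≤ Asub k n j := by
    intro ψ hψ
    rw [Asub, AlgHom.map_adjoin]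
    refine Algebra.adjoin_le ?_
    rintro _ ⟨x, ⟨i, hi, rfl⟩, rfl⟩
    exact hψ i hi
  refine le_antisymm (key φ (fun i hi => (h j hj i hi).1)) ?_
  intro x hx
  refine Subalgebra.mem_map.mpr ⟨φ⁻¹ x, ?_, φ.apply_symm_apply x⟩
  exact key φ⁻¹ (fun i hi => (h j hj i hi).2) (Subalgebra.mem_map.mpr ⟨x, hx, rfl⟩)


section T

variable (i : Fin n)

/-- Single out the variable `x_i`. -/
def Ti : MvPolynomial (Fin n) k →ₐ[k] Polynomial (MvPolynomial (Fin n) k) :=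
  aeval (fun j => if j = i then Polynomial.X else Polynomial.C (X j))

variable {i}

lemma Ti_X_self : Ti i (X i : MvPolynomial (Fin n) k) = Polynomial.X := by simp [Ti]

lemma Ti_X_ne {j : Fin n} (h : j ≠ i) :
    Ti i (X j : MvPolynomial (Fin n) k) = Polynomial.C (X j) := by
  simp [Ti, h]

lemma Ti_C (c : k) : Ti i (C c : MvPolynomial (Fin n) k) = Polynomial.C (C c) := by
  have h : (C c : MvPolynomial (Fin n) k) = algebraMap k _ c := rfl
  rw [h, AlgHom.commutes]
  rfl

lemma eval_Ti (p : MvPolynomial (Fin n) k) : Polynomial.eval (X i) (Ti i p) = p := by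
  induction p using MvPolynomial.induction_on with
  | C a => rw [Ti_C]; simp
  | add p q hp hq => simp [map_add, hp, hq]
  | mul_X p j hp =>
    by_cases h : j = i
    · subst h; rw [map_mul, Ti_X_self]; simp [hp]
    · rw [map_mul, Ti_X_ne h]; simp [hp]

lemma Ti_const {p : MvPolynomial (Fin n) k} (hp : p ∈ Asub k n (i : ℕ)) :
    Ti i p = Polynomial.C p := by
  refine Asub_induction (motive := fun p => Ti i p = Polynomial.C p)
    (fun l hl => ?_) (fun c => Ti_C c) (fun p q hp hq => ?_) (fun p q hp hq => ?_) hp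
  · exact Ti_X_ne (fun h => absurd (h ▸ hl) (lt_irrefl _))
  · simp only [map_add, hp, hq]
  · simp only [map_mul, hp, hq]

lemma Ti_coeff_mem {j : ℕ} {p : MvPolynomial (Fin n) k} (hp : p ∈ Asub k n j) (t : ℕ) :
    (Ti i p).coeff t ∈ supported k ({l : Fin n | (l : ℕ) < j} \ {i}) := by
  revert t
  refine Asub_induction
    (motive := fun p => ∀ t, (Ti i p).coeff t ∈ supported k ({l : Fin n | (l : ℕ) < j} \ {i}))
    (fun l hl t => ?_) (fun c t => ?_) (fun p q hp hq t => ?_) (fun p q hp hq t => ?_) hp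
  · by_cases h : l = i
    · subst h
      rw [Ti_X_self, Polynomial.coeff_X]
      split <;> first | exact one_mem _ | exact zero_mem _
    · rw [Ti_X_ne h, Polynomial.coeff_C]
      split
      · refine mem_supported.mpr ?_
        rw [vars_X]
        intro x hx
        simp only [Finset.coe_singleton, Set.mem_singleton_iff] at hx
        subst hx
        exact ⟨hl, h⟩
      · exact zero_mem _
  · rw [Ti_C, Polynomial.coeff_C]
    split
    · exact (supported k _).algebraMap_mem c
    · exact zero_mem _
  · simp only [map_add, Polynomial.coeff_add]
    exact add_mem (hp t) (hq t)
  · simp only [map_mul, Polynomial.coeff_mul]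
    exact sum_mem (fun x _ => mul_mem (hp x.1) (hq x.2))

lemma Ti_subst {φ : MvPolynomial (Fin n) k ≃ₐ[k] MvPolynomial (Fin n) k}
    (h : ∀ l : Fin n, (l : ℕ) < (i : ℕ) → Ti i (φ (X l)) = Polynomial.C (φ (X l)))
    {p : MvPolynomial (Fin n) k} (hp : p ∈ Asub k n ((i : ℕ) + 1)) :
    Ti i (φ p) = ((Ti i p).map (φ : MvPolynomial (Fin n) k →+* MvPolynomial (Fin n) k)).comp
      (Ti i (φ (X i))) := by
  refine Asub_induction (motive := fun p => Ti i (φ p) =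
      ((Ti i p).map (φ : MvPolynomial (Fin n) k →+* MvPolynomial (Fin n) k)).comp
        (Ti i (φ (X i))))
    (fun l hl => ?_) (fun c => ?_) (fun p q hp hq => ?_) (fun p q hp hq => ?_) hp
  · rcases Nat.lt_succ_iff_lt_or_eq.mp hl with hl | hl
    · rw [h l hl, Ti_X_ne (fun hli => absurd (hli ▸ hl) (lt_irrefl _)),
        Polynomial.map_C, Polynomial.C_comp]
      rfl
    · have hli : l = i := Fin.ext hl
      subst hli
      rw [Ti_X_self, Polynomial.map_X, Polynomial.X_comp]
  · have hc : φ (C c : MvPolynomial (Fin n) k) = C c := by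
      have h2 : (C c : MvPolynomial (Fin n) k) = algebraMap k _ c := rfl
      rw [h2, AlgEquiv.commutes]
    show Ti i (φ (C c)) = _
    rw [hc, Ti_C, Polynomial.map_C, Polynomial.C_comp]
    simp [hc]
  · show Ti i (φ (p + q)) = _
    simp only [map_add, Polynomial.map_add, Polynomial.add_comp, hp, hq]
  · show Ti i (φ (p * q)) = _
    simp only [map_mul, Polynomial.map_mul, Polynomial.mul_comp, hp, hq]

end T


lemma Asub_top : Asub k n n = ⊤ := by
  refine top_unique ?_
  intro p _
  rw [mem_Asub]
  intro l _
  exact l.isLt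

lemma eq_C_of_isUnit {p : MvPolynomial (Fin n) k} (hp : IsUnit p) : ∃ c : k, p = C c := by
  have hvars : ∀ l : Fin n, l ∉ p.vars := by
    intro l hl
    have hu : IsUnit (Ti l p) := hp.map (Ti l)
    have hd : (Ti l p).natDegree = 0 := Polynomial.natDegree_eq_zero_of_isUnit hu
    have hC : Ti l p = Polynomial.C ((Ti l p).coeff 0) :=
      Polynomial.eq_C_of_natDegree_eq_zero hd
    have hmem : (Ti l p).coeff 0 ∈ supported k ({l' : Fin n | (l' : ℕ) < n} \ {l}) :=
      Ti_coeff_mem (by rw [Asub_top]; trivial) 0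
    have hpe : p = (Ti l p).coeff 0 := by
      have := eval_Ti (i := l) p
      rw [hC] at this
      simpa using this.symm
    have hsub := mem_supported.mp hmem
    rw [← hpe] at hsub
    exact ((hsub hl).2 rfl).elim
  have hbot : p ∈ (⊥ : Subalgebra k (MvPolynomial (Fin n) k)) := by
    rw [← supported_empty, mem_supported]
    intro x hx
    exact absurd hx (hvars x)
  obtain ⟨c, hc⟩ := Algebra.mem_bot.mp hbot
  exact ⟨c, hc.symm⟩

lemma Jonq_structure {φ : MvPolynomial (Fin n) k ≃ₐ[k] MvPolynomial (Fin n) k}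
    (hφ : φ ∈ Jonq k n) (i : Fin n) :
    ∃ c : k, c ≠ 0 ∧ φ (X i) - C c * X i ∈ Asub k n (i : ℕ) := by
  have hφinv : φ⁻¹ ∈ Jonq k n := (Jonq k n).inv_mem hφ
  have hq : φ (X i) ∈ Asub k n ((i : ℕ) + 1) := Jonq_X_mem hφ i
  have hr : φ⁻¹ (X i) ∈ Asub k n ((i : ℕ) + 1) := Jonq_X_mem hφinv i
  set g : MvPolynomial (Fin n) k →+* MvPolynomial (Fin n) k :=
    ((φ⁻¹ : MvPolynomial (Fin n) k ≃ₐ[k] MvPolynomial (Fin n) k) :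
      MvPolynomial (Fin n) k →+* MvPolynomial (Fin n) k) with hg
  set P : Polynomial (MvPolynomial (Fin n) k) := Ti i (φ (X i)) with hP
  set R : Polynomial (MvPolynomial (Fin n) k) := Ti i (φ⁻¹ (X i)) with hR
  have hcond : ∀ l : Fin n, (l : ℕ) < (i : ℕ) →
      Ti i (φ⁻¹ (X l)) = Polynomial.C (φ⁻¹ (X l)) := by
    intro l hl
    exact Ti_const (Asub_mono (Nat.succ_le_of_lt hl) (Jonq_X_mem hφinv l))
  have hmain : Polynomial.X = (P.map g).comp R := by
    have h1 := Ti_subst (φ := φ⁻¹) hcond hq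
    have h2 : φ⁻¹ (φ (X i)) = X i := φ.symm_apply_apply (X i)
    rw [h2, Ti_X_self] at h1
    exact h1
  have hgi : Function.Injective g := φ⁻¹.injective
  have hdegs : (1 : ℕ) = P.natDegree * R.natDegree := by
    have := congrArg Polynomial.natDegree hmain
    rwa [Polynomial.natDegree_X, Polynomial.natDegree_comp,
      Polynomial.natDegree_map_eq_of_injective hgi] at this
  have hPdeg : P.natDegree = 1 := Nat.eq_one_of_mul_eq_one_right hdegs.symm
  have hRdeg : R.natDegree = 1 := Nat.eq_one_of_mul_eq_one_left hdegs.symm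
  have hPeq : P = Polynomial.C (P.coeff 1) * Polynomial.X + Polynomial.C (P.coeff 0) :=
    Polynomial.eq_X_add_C_of_natDegree_le_one (le_of_eq hPdeg)
  set a : MvPolynomial (Fin n) k := P.coeff 1 with ha
  set u : MvPolynomial (Fin n) k := P.coeff 0 with hu
  have hone : (1 : MvPolynomial (Fin n) k) = g a * R.coeff 1 := by
    have := congrArg (fun q => Polynomial.coeff q 1) hmain
    rw [hPeq] at this
    simpa [Polynomial.coeff_X_one, Polynomial.map_add, Polynomial.map_mul,
      Polynomial.map_C, Polynomial.map_X, Polynomial.add_comp, Polynomial.mul_comp,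
      Polynomial.C_comp, Polynomial.X_comp, Polynomial.coeff_add, Polynomial.coeff_C_mul,
      Polynomial.coeff_C] using this
  have hunit : IsUnit (g a) := IsUnit.of_mul_eq_one _ hone.symm
  obtain ⟨c, hc⟩ := eq_C_of_isUnit hunit
  have hc0 : c ≠ 0 := by
    intro h0
    rw [h0, map_zero] at hc
    rw [hc, zero_mul] at hone
    exact one_ne_zero hone
  have haC : a = C c := by
    have : φ (g a) = a := φ.apply_symm_apply a
    rw [← this, hc]
    have h2 : (C c : MvPolynomial (Fin n) k) = algebraMap k _ c := rfl
    rw [h2, AlgEquiv.commutes]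
  refine ⟨c, hc0, ?_⟩
  have hTif : Ti i (φ (X i) - C c * X i) = Polynomial.C u := by
    rw [map_sub, map_mul, Ti_C, Ti_X_self, ← hP, hPeq, ← haC]
    ring
  have hfu : φ (X i) - C c * X i = u := by
    have := eval_Ti (i := i) (φ (X i) - C c * X i)
    rw [hTif] at this
    simpa using this.symm
  rw [hfu]
  have hmem : u ∈ supported k ({l : Fin n | (l : ℕ) < (i : ℕ) + 1} \ {i}) :=
    Ti_coeff_mem hq 0
  rw [Asub_eq]
  refine supported_mono ?_ hmem
  rintro l ⟨hl1, hl2⟩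
  rcases Nat.lt_succ_iff_lt_or_eq.mp hl1 with h | h
  · exact h
  · exact absurd (Fin.ext h) hl2



lemma C_mem_Asub {j : ℕ} (c : k) : C c ∈ Asub k n j := by
  have h := (Asub k n j).algebraMap_mem c
  rwa [MvPolynomial.algebraMap_eq] at h

lemma AlgHom_C (ψ : MvPolynomial (Fin n) k →ₐ[k] MvPolynomial (Fin n) k) (c : k) :
    ψ (C c) = C c := by
  have h : (C c : MvPolynomial (Fin n) k) = algebraMap k _ c := rfl
  rw [h, AlgHom.commutes]

lemma AlgEquiv_C (φ : MvPolynomial (Fin n) k ≃ₐ[k] MvPolynomial (Fin n) k) (c : k) :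
    φ (C c) = C c := by
  have h : (C c : MvPolynomial (Fin n) k) = algebraMap k _ c := rfl
  rw [h, AlgEquiv.commutes]

lemma coeff_single_eq_zero {i : Fin n} {p : MvPolynomial (Fin n) k}
    (hp : p ∈ Asub k n (i : ℕ)) : coeff (Finsupp.single i 1) p = 0 := by
  by_contra h
  have hi : i ∈ p.vars := by
    rw [mem_vars]
    refine ⟨Finsupp.single i 1, ?_, ?_⟩
    · rwa [MvPolynomial.mem_support_iff]
    · rw [Finsupp.mem_support_iff, Finsupp.single_eq_same]
      exact one_ne_zero
  have h2 := mem_Asub.mp hp (Finset.mem_coe.mpr hi)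
  simp only [Set.mem_setOf_eq] at h2
  exact absurd h2 (lt_irrefl _)

/-- The "leading coefficient" of `φ(x_i)` relative to `x_i`. -/
def lc (φ : MvPolynomial (Fin n) k ≃ₐ[k] MvPolynomial (Fin n) k) (i : Fin n) : k :=
  coeff (Finsupp.single i 1) (φ (X i))

lemma lc_unique {φ : MvPolynomial (Fin n) k ≃ₐ[k] MvPolynomial (Fin n) k} {i : Fin n}
    {c : k} (h : φ (X i) - C c * X i ∈ Asub k n (i : ℕ)) : lc φ i = c := by
  have h0 := coeff_single_eq_zero h
  rw [MvPolynomial.coeff_sub, coeff_C_mul, coeff_X_same, mul_one, sub_eq_zero] at h0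
  exact h0

lemma lc_spec {φ : MvPolynomial (Fin n) k ≃ₐ[k] MvPolynomial (Fin n) k}
    (hφ : φ ∈ Jonq k n) (i : Fin n) :
    lc φ i ≠ 0 ∧ φ (X i) - C (lc φ i) * X i ∈ Asub k n (i : ℕ) := by
  obtain ⟨c, hc0, hmem⟩ := Jonq_structure hφ i
  have := lc_unique hmem
  rw [this]
  exact ⟨hc0, hmem⟩

lemma lc_mul {φ ψ : MvPolynomial (Fin n) k ≃ₐ[k] MvPolynomial (Fin n) k}
    (hφ : φ ∈ Jonq k n) (hψ : ψ ∈ Jonq k n) (i : Fin n) :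
    lc (φ * ψ) i = lc φ i * lc ψ i := by
  obtain ⟨-, hf⟩ := lc_spec hφ i
  obtain ⟨-, hg⟩ := lc_spec hψ i
  refine lc_unique ?_
  have hψeq : ψ (X i) = C (lc ψ i) * X i + (ψ (X i) - C (lc ψ i) * X i) := by ring
  have key : (φ * ψ) (X i) - C (lc φ i * lc ψ i) * X i =
      C (lc ψ i) * (φ (X i) - C (lc φ i) * X i) + φ (ψ (X i) - C (lc ψ i) * X i) := by
    rw [AlgEquiv.mul_apply]
    conv_lhs => rw [hψeq]
    rw [map_add, map_mul, AlgEquiv_C, C_mul]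
    ring
  rw [key]
  exact add_mem (mul_mem (C_mem_Asub _) hf) (Jonq_apply_mem hφ i.isLt.le hg)

lemma lc_one (i : Fin n) :
    lc (1 : MvPolynomial (Fin n) k ≃ₐ[k] MvPolynomial (Fin n) k) i = 1 := by
  rw [lc, AlgEquiv.one_apply, coeff_X_same]

lemma lc_inv {φ : MvPolynomial (Fin n) k ≃ₐ[k] MvPolynomial (Fin n) k}
    (hφ : φ ∈ Jonq k n) (i : Fin n) : lc φ⁻¹ i * lc φ i = 1 := by
  rw [← lc_mul ((Jonq k n).inv_mem hφ) hφ, inv_mul_cancel, lc_one]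

open scoped commutatorElement

lemma commutator_mem_JonqU {φ ψ : MvPolynomial (Fin n) k ≃ₐ[k] MvPolynomial (Fin n) k}
    (hφ : φ ∈ Jonq k n) (hψ : ψ ∈ Jonq k n) : ⁅φ, ψ⁆ ∈ JonqU k n := by
  have hφi : φ⁻¹ ∈ Jonq k n := (Jonq k n).inv_mem hφ
  have hψi : ψ⁻¹ ∈ Jonq k n := (Jonq k n).inv_mem hψ
  have hc : ⁅φ, ψ⁆ ∈ Jonq k n := by
    rw [commutatorElement_def]
    exact mul_mem (mul_mem (mul_mem hφ hψ) hφi) hψi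
  refine ⟨hc, fun i => ?_⟩
  have hlc : lc ⁅φ, ψ⁆ i = 1 := by
    rw [commutatorElement_def, lc_mul (mul_mem (mul_mem hφ hψ) hφi) hψi,
      lc_mul (mul_mem hφ hψ) hφi, lc_mul hφ hψ]
    have h1 := lc_inv hφ i
    have h2 := lc_inv hψ i
    linear_combination (lc ψ i * lc ψ⁻¹ i) * h1 + h2
  have := (lc_spec hc i).2
  rwa [hlc, map_one, one_mul] at this


lemma algEquiv_ext_X {φ ψ : MvPolynomial (Fin n) k ≃ₐ[k] MvPolynomial (Fin n) k}
    (h : ∀ j : Fin n, φ (X j) = ψ (X j)) : φ = ψ := by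
  have h2 : (φ : MvPolynomial (Fin n) k →ₐ[k] MvPolynomial (Fin n) k) =
      (ψ : MvPolynomial (Fin n) k →ₐ[k] MvPolynomial (Fin n) k) :=
    MvPolynomial.algHom_ext h
  exact AlgEquiv.ext (fun p => DFunLike.congr_fun h2 p)

section Constructions

/-- The elementary triangular homomorphism `x_m ↦ x_m + f`. -/
def elemHom (m : Fin n) (f : MvPolynomial (Fin n) k) :
    MvPolynomial (Fin n) k →ₐ[k] MvPolynomial (Fin n) k :=
  aeval (fun j => if j = m then X m + f else X j)

lemma elemHom_X_self (m : Fin n) (f : MvPolynomial (Fin n) k) :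
    elemHom m f (X m) = X m + f := by simp [elemHom]

lemma elemHom_X_ne (m : Fin n) (f : MvPolynomial (Fin n) k) {j : Fin n} (h : j ≠ m) :
    elemHom m f (X j) = X j := by simp [elemHom, h]

lemma elemHom_fix (m : Fin n) (f : MvPolynomial (Fin n) k) {p : MvPolynomial (Fin n) k}
    (hp : p ∈ Asub k n (m : ℕ)) : elemHom m f p = p := by
  refine aeval_fix_Asub (fun i hi => ?_) hp
  rw [if_neg (fun h => absurd (h ▸ hi) (lt_irrefl _))]

lemma elemHom_comp (m : Fin n) (f g : MvPolynomial (Fin n) k) (hg : g ∈ Asub k n (m : ℕ)) :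
    (elemHom m f).comp (elemHom m g) = elemHom m (f + g) := by
  refine MvPolynomial.algHom_ext (fun j => ?_)
  by_cases h : j = m
  · subst h
    rw [AlgHom.comp_apply, elemHom_X_self, map_add, elemHom_X_self, elemHom_fix _ f hg,
      elemHom_X_self]
    ring
  · rw [AlgHom.comp_apply, elemHom_X_ne _ _ h, elemHom_X_ne _ _ h, elemHom_X_ne _ _ h]

lemma elemHom_zero (m : Fin n) :
    elemHom m (0 : MvPolynomial (Fin n) k) = AlgHom.id k (MvPolynomial (Fin n) k) := by
  refine MvPolynomial.algHom_ext (fun j => ?_)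
  by_cases h : j = m
  · subst h; rw [elemHom_X_self, add_zero]; rfl
  · rw [elemHom_X_ne _ _ h]; rfl

/-- The elementary triangular automorphism `x_m ↦ x_m + f`. -/
def elemE (m : Fin n) (f : MvPolynomial (Fin n) k) (hf : f ∈ Asub k n (m : ℕ)) :
    MvPolynomial (Fin n) k ≃ₐ[k] MvPolynomial (Fin n) k :=
  AlgEquiv.ofAlgHom (elemHom m f) (elemHom m (-f))
    (by rw [elemHom_comp m f (-f) (neg_mem hf), add_neg_cancel, elemHom_zero])
    (by rw [elemHom_comp m (-f) f hf, neg_add_cancel, elemHom_zero])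

lemma elemE_apply (m : Fin n) (f : MvPolynomial (Fin n) k) (hf : f ∈ Asub k n (m : ℕ))
    (p : MvPolynomial (Fin n) k) : elemE m f hf p = elemHom m f p := rfl

lemma elemE_inv_apply (m : Fin n) (f : MvPolynomial (Fin n) k) (hf : f ∈ Asub k n (m : ℕ))
    (p : MvPolynomial (Fin n) k) : (elemE m f hf)⁻¹ p = elemHom m (-f) p := rfl

/-- The diagonal homomorphism `x_j ↦ c_j x_j`. -/
def diagHom (c : Fin n → kˣ) :
    MvPolynomial (Fin n) k →ₐ[k] MvPolynomial (Fin n) k :=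
  aeval (fun j => C (c j : k) * X j)

lemma diagHom_X (c : Fin n → kˣ) (j : Fin n) :
    diagHom c (X j) = C (c j : k) * X j := by simp [diagHom]

lemma diagHom_comp (c c' : Fin n → kˣ) :
    (diagHom c).comp (diagHom c') = diagHom (c * c') := by
  refine MvPolynomial.algHom_ext (fun j => ?_)
  have hC : ∀ a : k, diagHom (k := k) (n := n) c (C a) = C a := by
    intro a
    have h : (C a : MvPolynomial (Fin n) k) = algebraMap k _ a := rfl
    rw [h, AlgHom.commutes]
  rw [AlgHom.comp_apply, diagHom_X, map_mul, diagHom_X, hC, diagHom_X, Pi.mul_apply,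
    Units.val_mul, C_mul]
  ring

lemma diagHom_one :
    diagHom (1 : Fin n → kˣ) = AlgHom.id k (MvPolynomial (Fin n) k) := by
  refine MvPolynomial.algHom_ext (fun j => ?_)
  rw [diagHom_X]
  simp

/-- The diagonal automorphism `x_j ↦ c_j x_j`. -/
def diagE (c : Fin n → kˣ) :
    MvPolynomial (Fin n) k ≃ₐ[k] MvPolynomial (Fin n) k :=
  AlgEquiv.ofAlgHom (diagHom c) (diagHom c⁻¹)
    (by rw [diagHom_comp, mul_inv_cancel, diagHom_one])
    (by rw [diagHom_comp, inv_mul_cancel, diagHom_one])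

lemma diagE_apply (c : Fin n → kˣ) (p : MvPolynomial (Fin n) k) :
    diagE c p = diagHom c p := rfl

lemma diagE_inv_apply (c : Fin n → kˣ) (p : MvPolynomial (Fin n) k) :
    (diagE c)⁻¹ p = diagHom c⁻¹ p := rfl

lemma diagHom_fix (c : Fin n → kˣ) {m : ℕ} (hc : ∀ j : Fin n, (j : ℕ) < m → c j = 1)
    {p : MvPolynomial (Fin n) k} (hp : p ∈ Asub k n m) : diagHom c p = p := by
  refine aeval_fix_Asub (fun i hi => ?_) hp
  rw [hc i hi]
  simp

end Constructions


lemma elemE_mem_JonqU (m : Fin n) (f : MvPolynomial (Fin n) k)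
    (hf : f ∈ Asub k n (m : ℕ)) : elemE m f hf ∈ JonqU k n := by
  have hmem : ∀ g : MvPolynomial (Fin n) k, g ∈ Asub k n (m : ℕ) →
      ∀ j ≤ n, ∀ i : Fin n, (i : ℕ) < j → elemHom m g (X i) ∈ Asub k n j := by
    intro g hg j hj i hi
    by_cases h : i = m
    · subst h
      rw [elemHom_X_self]
      exact add_mem (X_mem_Asub hi) (Asub_mono (le_of_lt hi) hg)
    · rw [elemHom_X_ne _ _ h]
      exact X_mem_Asub hi
  have hJ : elemE m f hf ∈ Jonq k n := by
    refine Jonq_of_gen (fun j hj i hi => ⟨?_, ?_⟩)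
    · rw [elemE_apply]; exact hmem f hf j hj i hi
    · rw [elemE_inv_apply]; exact hmem (-f) (neg_mem hf) j hj i hi
  refine ⟨hJ, fun i => ?_⟩
  rw [elemE_apply]
  by_cases h : i = m
  · subst h
    rw [elemHom_X_self, add_sub_cancel_left]
    exact hf
  · rw [elemHom_X_ne _ _ h, sub_self]
    exact zero_mem _

lemma diagE_mem_Jonq (c : Fin n → kˣ) : diagE c ∈ Jonq k n := by
  refine Jonq_of_gen (fun j hj i hi => ⟨?_, ?_⟩)
  · rw [diagE_apply, diagHom_X]
    exact C_mul_X_mem_Asub hi _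
  · rw [diagE_inv_apply, diagHom_X]
    exact C_mul_X_mem_Asub hi _

lemma exists_ne_zero_ne_one [IsAlgClosed k] : ∃ t : k, t ≠ 0 ∧ t ≠ 1 := by
  obtain ⟨t, ht⟩ := IsAlgClosed.exists_root
    (Polynomial.C 1 * Polynomial.X ^ 2 + Polynomial.C (-1) * Polynomial.X + Polynomial.C 1 : Polynomial k)
    (by rw [Polynomial.degree_quadratic one_ne_zero]; exact (by decide : (2 : WithBot ℕ) ≠ 0))
  have heval : t ^ 2 - t + 1 = 0 := by
    have h := ht
    simp only [Polynomial.IsRoot, Polynomial.eval_add, Polynomial.eval_mul,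
      Polynomial.eval_pow, Polynomial.eval_C, Polynomial.eval_X] at h
    linear_combination h
  refine ⟨t, fun h0 => ?_, fun h1 => ?_⟩
  · rw [h0] at heval
    simp at heval
  · rw [h1] at heval
    simp at heval

lemma elemE_mem_commutator [IsAlgClosed k] (m : Fin n) (f : MvPolynomial (Fin n) k)
    (hf : f ∈ Asub k n (m : ℕ)) : elemE m f hf ∈ ⁅Jonq k n, Jonq k n⁆ := by
  obtain ⟨t, ht0, ht1⟩ := exists_ne_zero_ne_one (k := k)
  have htinv : t⁻¹ - 1 ≠ 0 := by
    rw [sub_ne_zero]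
    intro h
    exact ht1 (by rw [← inv_inv t, h, inv_one])
  set c : Fin n → kˣ := fun j => if j = m then Units.mk0 t ht0 else 1 with hc
  set g : MvPolynomial (Fin n) k := C ((t⁻¹ - 1)⁻¹) * f with hgdef
  have hg : g ∈ Asub k n (m : ℕ) := mul_mem (C_mem_Asub _) hf
  have hcfix : ∀ j : Fin n, (j : ℕ) < (m : ℕ) → c j = 1 := by
    intro j hj
    have hjm : j ≠ m := by intro h; subst h; exact absurd hj (lt_irrefl _)
    simp only [hc, if_neg hjm]
  have hcifix : ∀ j : Fin n, (j : ℕ) < (m : ℕ) → c⁻¹ j = 1 := by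
    intro j hj
    rw [Pi.inv_apply, hcfix j hj, inv_one]
  have key : ⁅diagE c, elemE m g hg⁆ = elemE m f hf := by
    rw [commutatorElement_def]
    refine algEquiv_ext_X (fun j => ?_)
    rw [AlgEquiv.mul_apply, AlgEquiv.mul_apply, AlgEquiv.mul_apply]
    by_cases h : j = m
    · subst h
      have hcj : (↑(c j) : k) = t := by simp [hc]
      have hcij : (↑(c⁻¹ j) : k) = t⁻¹ := by
        rw [Pi.inv_apply]
        simp [hc]
      have s1 : (elemE j g hg)⁻¹ (X j) = X j - g := by
        rw [elemE_inv_apply, elemHom_X_self]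
        ring
      have s2 : (diagE c)⁻¹ (X j - g) = C t⁻¹ * X j - g := by
        rw [diagE_inv_apply, map_sub, diagHom_X, diagHom_fix c⁻¹ hcifix hg, hcij]
      have s3 : elemE j g hg (C t⁻¹ * X j - g) = C t⁻¹ * (X j + g) - g := by
        rw [elemE_apply, map_sub, map_mul, AlgHom_C, elemHom_X_self, elemHom_fix _ _ hg]
      have s4 : diagE c (C t⁻¹ * (X j + g) - g) = C t⁻¹ * (C t * X j + g) - g := by
        rw [diagE_apply, map_sub, map_mul, map_add, AlgHom_C, diagHom_X,
          diagHom_fix c hcfix hg, hcj]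
      rw [s1, s2, s3, s4, elemE_apply, elemHom_X_self]
      have e1 : (C t⁻¹ * C t : MvPolynomial (Fin n) k) = 1 := by
        rw [← C_mul, inv_mul_cancel₀ ht0, C_1]
      have e2 : ((C t⁻¹ - 1) * C ((t⁻¹ - 1)⁻¹) : MvPolynomial (Fin n) k) = 1 := by
        have hsub : (C t⁻¹ - 1 : MvPolynomial (Fin n) k) = C (t⁻¹ - 1) := by
          rw [C_sub, C_1]
        rw [hsub, ← C_mul, mul_inv_cancel₀ htinv, C_1]
      rw [hgdef]
      linear_combination (X j : MvPolynomial (Fin n) k) * e1 + f * e2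
    · have hcj : c j = 1 := by simp only [hc, if_neg h]
      rw [elemE_inv_apply, elemHom_X_ne _ _ h, diagE_inv_apply, diagHom_X,
        elemE_apply, map_mul, elemHom_X_ne _ _ h, AlgHom_C, diagE_apply, map_mul,
        diagHom_X, AlgHom_C, elemE_apply, elemHom_X_ne _ _ h, Pi.inv_apply, hcj]
      simp
  rw [← key]
  exact Subgroup.commutator_mem_commutator (diagE_mem_Jonq c) (elemE_mem_JonqU m g hg).1

lemma JonqU_decomp [IsAlgClosed k] :
    ∀ m : ℕ, m ≤ n → ∀ φ, φ ∈ JonqU k n →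
      (∀ i : Fin n, m ≤ (i : ℕ) → φ (X i) = X i) → φ ∈ ⁅Jonq k n, Jonq k n⁆ := by
  intro m
  induction m with
  | zero =>
    intro _ φ hφ hfix
    have : φ = 1 := algEquiv_ext_X (fun j => by rw [hfix j (Nat.zero_le _)]; rfl)
    rw [this]
    exact Subgroup.one_mem _
  | succ m ih =>
    intro hm φ hφ hfix
    have hmn : m < n := lt_of_lt_of_le (Nat.lt_succ_self m) hm
    set M : Fin n := ⟨m, hmn⟩ with hM
    set f : MvPolynomial (Fin n) k := φ (X M) - X M with hfdef
    have hf : f ∈ Asub k n (M : ℕ) := hφ.2 M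
    set e := elemE M f hf with he
    set ψ := e⁻¹ * φ with hψ
    have hψU : ψ ∈ JonqU k n :=
      mul_mem (inv_mem (elemE_mem_JonqU M f hf)) hφ
    have hψfix : ∀ i : Fin n, m ≤ (i : ℕ) → ψ (X i) = X i := by
      intro i hi
      rcases eq_or_lt_of_le hi with h | h
      · have hiM : i = M := Fin.ext h.symm
        rw [hψ, AlgEquiv.mul_apply, hiM]
        have h2 : φ (X M) = X M + f := by rw [hfdef]; ring
        rw [h2, he, elemE_inv_apply, map_add, elemHom_X_self, elemHom_fix _ _ hf]
        ring
      · have hiM : i ≠ M := by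
          intro hh
          rw [hh] at h
          exact absurd rfl (ne_of_gt h)
        rw [hψ, AlgEquiv.mul_apply, hfix i h, he, elemE_inv_apply, elemHom_X_ne _ _ hiM]
    have hψC : ψ ∈ ⁅Jonq k n, Jonq k n⁆ :=
      ih (le_of_lt hm) ψ hψU hψfix
    have hφec : φ = e * ψ := by rw [hψ, ← mul_assoc, mul_inv_cancel, one_mul]
    rw [hφec]
    exact mul_mem (elemE_mem_commutator M f hf) hψC

-- MORE

variable (k n)

/-- The derived subgroup of the Jonquières group is its unipotent part. -/
theorem jonq_commutator [IsAlgClosed k] (hn : 1 ≤ n) :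
    ⁅Jonq k n, Jonq k n⁆ = JonqU k n := by
  refine le_antisymm
    (Subgroup.commutator_le.mpr fun g₁ h₁ g₂ h₂ => commutator_mem_JonqU h₁ h₂) ?_
  intro φ hφ
  exact JonqU_decomp n le_rfl φ hφ (fun i hi => absurd i.isLt (not_lt.mpr hi))

end
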